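/- Let S be a finite set and q : S × S → ℕ with n := ∑_{a,b} q(a,b) ≥ 1. Assume: (balance) for every a ∈ S, ∑_b q(a,b) = ∑_b q(b,a); and (connectivity) for all a, a' ∈ S with ∑_b q(a,b) > 0 and ∑_b q(a',b) > 0, there exist m ≥ 1 and s₁,…,s_m ∈ S with s₁ = a, s_m = a', and q(s_i, s_{i+1}) > 0 for all 1 ≤ i < m. Then there exists a sequence s : ℤ/nℤ → S such that for every pair (a,b) ∈ S × S, the number of t ∈ ℤ/nℤ with s(t) = a and s(t+1) = b is exactly q(a,b). -/

import Mathlib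

/-!
Read `q a b` as the number of arcs from `a` to `b` and take a longest trail, i.e. a walk using
each arc `(a, b)` at most `q a b` times. Every arc leaving its last vertex is used (otherwise the
trail extends), and balance then forces the trail to be closed. A closed trail can be rotated to
start at any of its vertices, so the same maximality shows that every arc leaving a vertex of the
trail is used. Thus the vertices of the trail are closed under arcs, connectivity puts every
vertex with an outgoing arc on it, and the trail is an Eulerian circuit; reading it cyclically
gives the sequence `s`.
-/

open Finset

theorem sum_count_fst {α β : Type*} [DecidableEq α] [DecidableEq β] [Fintype β]
    (L : List (α × β)) (a : α) :
    ∑ b, L.count (a, b) = (L.map Prod.fst).count a := by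
  induction L with
  | nil => simp
  | cons x L ih =>
    simp only [List.count_cons, Finset.sum_add_distrib, ih, List.map_cons]
    rcases x with ⟨c, d⟩
    by_cases h : c = a <;> simp [h, Prod.ext_iff]

theorem sum_count_snd {α β : Type*} [DecidableEq α] [DecidableEq β] [Fintype α]
    (L : List (α × β)) (b : β) :
    ∑ a, L.count (a, b) = (L.map Prod.snd).count b := by
  induction L with
  | nil => simp
  | cons x L ih =>
    simp only [List.count_cons, Finset.sum_add_distrib, ih, List.map_cons]
    rcases x with ⟨c, d⟩
    by_cases h : d = b <;> simp [h, Prod.ext_iff]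

theorem sum_sum_count {α β : Type*} [DecidableEq α] [DecidableEq β] [Fintype α] [Fintype β]
    (L : List (α × β)) : ∑ a, ∑ b, L.count (a, b) = L.length := by
  simp_rw [sum_count_fst]
  simpa using Multiset.sum_count_eq_card (m := ((L.map Prod.fst : List α) : Multiset α))
    fun _ _ => mem_univ _

section

variable {S : Type*}

def walkArcs (w : List S) : List (S × S) := w.zip w.tail

def cycleArcs (l : List S) : List (S × S) := l.zip (l.rotate 1)

theorem walkArcs_concat : ∀ (w : List S) (hw : w ≠ []) (b : S),
    walkArcs (w ++ [b]) = walkArcs w ++ [(w.getLast hw, b)]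
  | [_], _, _ => rfl
  | x :: y :: w, _, b => by
    have ih := walkArcs_concat (y :: w) (List.cons_ne_nil y w) b
    simp_all [walkArcs]

theorem walkArcs_append_head : ∀ (l : List S) (hl : l ≠ []),
    walkArcs (l ++ [l.head hl]) = cycleArcs l
  | x :: t, _ => by
    simpa [walkArcs, cycleArcs, List.rotate_cons_succ] using
      List.zip_append (l₁ := x :: t) (r₁ := [x]) (l₂ := t ++ [x]) (r₂ := []) (by simp)

theorem map_fst_walkArcs : ∀ w : List S, (walkArcs w).map Prod.fst = w.dropLast
  | [] => rfl
  | [_] => rfl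
  | x :: y :: w => by
    have ih := map_fst_walkArcs (y :: w)
    simp_all [walkArcs]

theorem map_snd_walkArcs (w : List S) : (walkArcs w).map Prod.snd = w.tail :=
  List.map_snd_zip (by simp)

theorem length_cycleArcs (l : List S) : (cycleArcs l).length = l.length := by
  simp [cycleArcs]

theorem map_fst_cycleArcs (l : List S) : (cycleArcs l).map Prod.fst = l :=
  List.map_fst_zip (by simp)

theorem mem_of_mem_cycleArcs {l : List S} {a b : S} (h : (a, b) ∈ cycleArcs l) : b ∈ l :=
  List.mem_rotate.1 (List.of_mem_zip h).2

theorem cycleArcs_rotate (l : List S) (k : ℕ) :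
    cycleArcs (l.rotate k) = (cycleArcs l).rotate k := by
  rw [cycleArcs, cycleArcs, List.zip, List.zipWith_rotate_distrib _ _ _ _ (by simp),
    List.rotate_rotate, List.rotate_rotate, add_comm]

theorem List.IsRotated.cycleArcs_perm {l l' : List S} (h : l.IsRotated l') :
    (cycleArcs l).Perm (cycleArcs l') := by
  obtain ⟨k, rfl⟩ := h
  rw [cycleArcs_rotate]
  exact (List.rotate_perm _ _).symm

theorem cycleArcs_eq_map_range (l : List S) (d : S) :
    cycleArcs l = (List.range l.length).map
      fun t => (l.getD t d, l.getD ((t + 1) % l.length) d) := by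
  refine List.ext_getElem (by simp [cycleArcs]) fun t _ ht => ?_
  rw [List.length_map, List.length_range] at ht
  have ht' : (t + 1) % l.length < l.length := Nat.mod_lt _ (by omega)
  simp [cycleArcs, List.getElem_rotate, List.getElem?_eq_getElem ht,
    List.getElem?_eq_getElem ht']

variable [DecidableEq S]

theorem count_cycleArcs_eq_card (l : List S) (d a b : S) :
    (cycleArcs l).count (a, b) =
      #{t ∈ range l.length | l.getD t d = a ∧ l.getD ((t + 1) % l.length) d = b} := by
  rw [cycleArcs_eq_map_range l d, List.count, List.countP_map, List.countP_eq_length_filter]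
  trans ((List.range l.length).filter
    fun t => l.getD t d = a ∧ l.getD ((t + 1) % l.length) d = b).length
  · congr 2 with t
    rw [Bool.eq_iff_iff]
    simp
  · rfl

def IsTrail (q : S → S → ℕ) (w : List S) : Prop :=
  ∀ a b, (walkArcs w).count (a, b) ≤ q a b

variable {q : S → S → ℕ}

theorem IsTrail.concat {w : List S} {b : S} (hw : IsTrail q w) (hne : w ≠ [])
    (hb : (walkArcs w).count (w.getLast hne, b) < q (w.getLast hne) b) :
    IsTrail q (w ++ [b]) := by
  intro a c
  rw [walkArcs_concat w hne, List.count_append, List.count_singleton]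
  by_cases h : (w.getLast hne, b) = (a, c)
  · obtain ⟨hu, rfl⟩ := Prod.mk.inj h
    rw [hu] at hb
    simp [hu]
    omega
  · simpa [h] using hw a c

theorem exists_trail_of_count_cycleArcs_lt {l : List S} {v b : S}
    (hl : ∀ a c, (cycleArcs l).count (a, c) ≤ q a c) (hv : v ∈ l)
    (hb : (cycleArcs l).count (v, b) < q v b) :
    ∃ w, IsTrail q w ∧ w.length = l.length + 2 := by
  obtain ⟨x, y, rfl⟩ := List.append_of_mem hv
  have hcount : ∀ a c, (walkArcs ((v :: (y ++ x)) ++ [v])).count (a, c) =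
      (cycleArcs (x ++ v :: y)).count (a, c) := fun a c => by
    rw [show walkArcs (v :: (y ++ x) ++ [v]) = _ from
      walkArcs_append_head (v :: (y ++ x)) (List.cons_ne_nil _ _)]
    exact ((List.isRotated_append (l := x) (l' := v :: y)).cycleArcs_perm.count_eq _).symm
  refine ⟨v :: (y ++ x) ++ [v] ++ [b],
    IsTrail.concat (fun a c => (hcount a c).trans_le (hl a c)) (by simp) ?_, by simp; omega⟩
  rwa [List.getLast_append_singleton, hcount]

variable [Fintype S]

theorem IsTrail.length_le {w : List S} (hw : IsTrail q w) :
    w.length ≤ ∑ a, ∑ b, q a b + 1 := by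
  have h : (walkArcs w).length = w.length - 1 := by simp [walkArcs]
  calc w.length ≤ (walkArcs w).length + 1 := by omega
    _ = ∑ a, ∑ b, (walkArcs w).count (a, b) + 1 := by rw [sum_sum_count]
    _ ≤ _ := by gcongr with a _ b _; exact hw a b

theorem exists_longest_trail (q : S → S → ℕ) :
    ∃ w, IsTrail q w ∧ ∀ w', IsTrail q w' → w'.length ≤ w.length :=
  Set.exists_max_image {w | IsTrail q w} List.length
    ((List.finite_length_le S _).subset fun _ hw => IsTrail.length_le hw)
    ⟨[], fun a b => by simp [walkArcs]⟩

theorem IsTrail.getLast_eq_head (hbal : ∀ a, ∑ b, q a b = ∑ b, q b a) {w : List S}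
    (hw : IsTrail q w) (hne : w ≠ [])
    (hsat : ∀ b, (walkArcs w).count (w.getLast hne, b) = q (w.getLast hne) b) :
    w.getLast hne = w.head hne := by
  set u := w.getLast hne
  by_contra hu
  have hout : ∑ b, q u b = w.dropLast.count u := by
    simp_rw [← hsat, sum_count_fst, map_fst_walkArcs]
  have hin : w.tail.count u ≤ ∑ a, q a u := by
    rw [← map_snd_walkArcs, ← sum_count_snd]
    exact sum_le_sum fun a _ => hw a u
  have hlast : w.count u = w.dropLast.count u + 1 := by
    conv_lhs => rw [← List.dropLast_append_getLast hne]
    simp [u]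
  have hhead : w.count u = w.tail.count u := by
    conv_lhs => rw [← List.cons_head_tail hne]
    rw [List.count_cons]
    simp [Ne.symm hu]
  have := hbal u
  omega

theorem exists_saturated_cycle (hbal : ∀ a, ∑ b, q a b = ∑ b, q b a) {a₀ b₀ : S}
    (hpos : 0 < q a₀ b₀) :
    ∃ l : List S, l ≠ [] ∧ (∀ a b, (cycleArcs l).count (a, b) ≤ q a b) ∧
      ∀ v ∈ l, ∀ b, (cycleArcs l).count (v, b) = q v b := by
  obtain ⟨w, hw, hmax⟩ := exists_longest_trail q
  have hlen : 2 ≤ w.length := hmax [a₀, b₀] fun a b => by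
    by_cases h : (a₀, b₀) = (a, b)
    · obtain ⟨rfl, rfl⟩ := Prod.mk.inj h
      simpa [walkArcs, Nat.one_le_iff_ne_zero, ← pos_iff_ne_zero] using hpos
    · simp [walkArcs, h]
  have hne : w ≠ [] := List.ne_nil_of_length_pos (by omega)
  have hsat : ∀ b, (walkArcs w).count (w.getLast hne, b) = q (w.getLast hne) b := fun b =>
    (hw _ _).antisymm <| not_lt.1 fun h => by simpa using hmax _ (hw.concat hne h)
  have hl : w.dropLast ≠ [] := List.ne_nil_of_length_pos (by simp; omega)
  have hclosed : w = w.dropLast ++ [w.dropLast.head hl] := by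
    conv_lhs => rw [← List.dropLast_append_getLast hne]
    rw [hw.getLast_eq_head hbal hne hsat, List.head_dropLast]
  have harcs : walkArcs w = cycleArcs w.dropLast := by
    rw [← walkArcs_append_head _ hl, ← hclosed]
  refine ⟨w.dropLast, hl, harcs ▸ hw, fun v hv b => (harcs ▸ hw v b).antisymm ?_⟩
  refine not_lt.1 fun h => ?_
  obtain ⟨w', hw', hlen'⟩ := exists_trail_of_count_cycleArcs_lt (harcs ▸ hw) hv h
  have := hmax w' hw'
  simp at hlen'
  omega

theorem count_cycleArcs_eq_of_saturated
    (hconn : ∀ a a' : S, 0 < ∑ b, q a b → 0 < ∑ b, q a' b →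
      ∃ (m : ℕ) (c : ℕ → S), c 0 = a ∧ c m = a' ∧ ∀ i < m, 0 < q (c i) (c (i + 1)))
    {l : List S} (hl : l ≠ []) (hle : ∀ a b, (cycleArcs l).count (a, b) ≤ q a b)
    (hsat : ∀ v ∈ l, ∀ b, (cycleArcs l).count (v, b) = q v b) (a b : S) :
    (cycleArcs l).count (a, b) = q a b := by
  by_cases ha : ∑ b, q a b = 0
  · have := hle a b
    have := (Finset.sum_eq_zero_iff.1 ha) b (mem_univ b)
    omega
  have hclosed : ∀ v ∈ l, ∀ b, 0 < q v b → b ∈ l := fun v hv b h =>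
    mem_of_mem_cycleArcs (List.count_pos_iff.1 ((hsat v hv b).symm ▸ h))
  have hhead : 0 < ∑ b, q (l.head hl) b := by
    rw [← Finset.sum_congr rfl fun b _ => hsat _ (List.head_mem hl) b, sum_count_fst,
      map_fst_cycleArcs]
    exact List.count_pos_iff.2 (List.head_mem hl)
  obtain ⟨m, c, hc0, hcm, hc⟩ := hconn _ a hhead (Nat.pos_of_ne_zero ha)
  have hpath : ∀ i ≤ m, c i ∈ l := by
    intro i
    induction i with
    | zero => exact fun _ => hc0 ▸ List.head_mem hl
    | succ i ih => exact fun hi => hclosed _ (ih (by omega)) _ (hc i (by omega))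
  exact hsat a (hcm ▸ hpath m le_rfl) b

end

/-- The Eulerian-circuit construction of Markov type classes: if the matrix of
arc multiplicities `q : S × S → ℕ` (with total number of arcs `n ≥ 1`) is
balanced and its support is connected, then there is a cyclic sequence of `n`
states whose pair-transition counts are exactly `q`. -/
theorem markov_type_nonempty
    {S : Type*} [Fintype S] [DecidableEq S] (q : S → S → ℕ) (n : ℕ)
    (hn : n = ∑ a, ∑ b, q a b) (hn1 : 1 ≤ n)
    (hbal : ∀ a, ∑ b, q a b = ∑ b, q b a)
    (hconn : ∀ a a' : S, 0 < ∑ b, q a b → 0 < ∑ b, q a' b →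
      ∃ (m : ℕ) (c : ℕ → S), c 0 = a ∧ c m = a' ∧
        ∀ i < m, 0 < q (c i) (c (i + 1))) :
    ∃ s : ℕ → S, ∀ a b : S,
      ((Finset.range n).filter fun t => s t = a ∧ s ((t + 1) % n) = b).card
        = q a b := by
  obtain ⟨a₀, b₀, hpos⟩ : ∃ a b, 0 < q a b := by
    by_contra! h
    simp_all
  obtain ⟨l, hl, hle, hsat⟩ := exists_saturated_cycle hbal hpos
  have hq := count_cycleArcs_eq_of_saturated hconn hl hle hsat
  have hlen : l.length = n := by
    rw [hn, ← length_cycleArcs, ← sum_sum_count]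
    simp only [hq]
  refine ⟨fun t => l.getD t a₀, fun a b => ?_⟩
  rw [← hq, count_cycleArcs_eq_card l a₀, hlen]
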